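/- arXiv:1511.04315 — 3 statements merged into one kernel-verified Lean document; each statement's English description precedes it below -/
import Mathlib

section
/- Let p be an odd prime and consider the sequence of rows e_1, e_2, ... of 0-1 sequences defined by: e_1(k) = 1 if p divides k and 0 otherwise, and e_{j+1}(k) = e_j(k) XOR e_j(k+1) (addition in F_2). Then the rows are eventually periodic with the pre-period consisting only of the first row; more precisely, e_2 = e_{2 + (2^{ord_p(2)} - 1)}, so the period length divides 2^{ord_p(2)} - 1. -/
open Finset

lemma aux_pascal (f : ℕ → ZMod 2) (m k : ℕ) :
    (∑ i ∈ range (m+1), (m.choose i : ZMod 2) * f (k+i)) +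
    (∑ i ∈ range (m+1), (m.choose i : ZMod 2) * f (k+1+i)) =
    ∑ i ∈ range (m+2), ((m+1).choose i : ZMod 2) * f (k+i) := by
  rw [Finset.sum_range_succ' (fun i => ((m+1).choose i : ZMod 2) * f (k+i))]
  have h2 : ∑ i ∈ range (m+1), ((m+1).choose (i+1) : ZMod 2) * f (k+(i+1))
      = ∑ i ∈ range (m+1), ((m.choose i : ZMod 2) * f (k+(i+1))
          + (m.choose (i+1) : ZMod 2) * f (k+(i+1))) := by
    apply Finset.sum_congr rfl; intro i _
    rw [Nat.choose_succ_succ]; push_cast; ring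
  rw [h2, Finset.sum_add_distrib]
  have hB : ∑ i ∈ range (m+1), (m.choose (i+1) : ZMod 2) * f (k+(i+1))
      = ∑ i ∈ range m, (m.choose (i+1) : ZMod 2) * f (k+(i+1)) := by
    rw [Finset.sum_range_succ]; simp [Nat.choose_succ_self]
  have hS1 : ∑ i ∈ range (m+1), (m.choose i : ZMod 2) * f (k+i)
      = ∑ i ∈ range m, (m.choose (i+1) : ZMod 2) * f (k+(i+1)) + f k := by
    rw [Finset.sum_range_succ' (fun i => ((m.choose i : ZMod 2)) * f (k+i))]; simp
  have hS2 : ∑ i ∈ range (m+1), (m.choose i : ZMod 2) * f (k+1+i)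
      = ∑ i ∈ range (m+1), (m.choose i : ZMod 2) * f (k+(i+1)) := by
    apply Finset.sum_congr rfl; intro i _; congr 2; omega
  rw [hS1, hS2, hB]
  simp
  ring

lemma aux_row (e : ℕ → ℕ → ZMod 2)
    (hrec : ∀ j k, 1 ≤ j → 1 ≤ k → e (j + 1) k = e j k + e j (k + 1)) :
    ∀ m k, 1 ≤ k → e (1+m) k = ∑ i ∈ range (m+1), (m.choose i : ZMod 2) * e 1 (k+i) := by
  intro m
  induction m with
  | zero => intro k hk; simp
  | succ m ih =>
      intro k hk
      have h1 : (1:ℕ) ≤ 1 + m := by omega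
      have := hrec (1+m) k h1 hk
      rw [show 1 + (m+1) = (1+m)+1 by omega, this, ih k hk, ih (k+1) (by omega)]
      exact aux_pascal (e 1) m k

theorem stmt_14 (p : ℕ) (hp : p.Prime) (hodd : Odd p)
    (e : ℕ → ℕ → ZMod 2)
    (h1 : ∀ k, 1 ≤ k → e 1 k = if p ∣ k then 1 else 0)
    (hrec : ∀ j k, 1 ≤ j → 1 ≤ k → e (j + 1) k = e j k + e j (k + 1)) :
    ∀ k, 1 ≤ k → e 2 k = e (2 + (2 ^ orderOf (2 : ZMod p) - 1)) k := by
  intro k hk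
  set d := orderOf (2 : ZMod p) with hd
  have hpow : (1:ℕ) ≤ 2 ^ d := Nat.one_le_two_pow
  have hidx : 2 + (2 ^ d - 1) = 1 + 2 ^ d := by omega
  rw [hidx]
  have h2 : e 2 k = e 1 k + e 1 (k+1) := hrec 1 k le_rfl hk
  rw [h2, aux_row e hrec (2^d) k hk]
  have hmod : (2:ℕ) ^ d ≡ 1 [MOD p] := by
    have hc : ((2^d : ℕ) : ZMod p) = ((1:ℕ) : ZMod p) := by
      push_cast
      exact pow_orderOf_eq_one (2 : ZMod p)
    exact (ZMod.natCast_eq_natCast_iff _ _ _).mp hc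
  have hsum : ∑ i ∈ range (2^d+1), ((2^d).choose i : ZMod 2) * e 1 (k+i)
      = e 1 k + e 1 (k + 2^d) := by
    rw [Finset.sum_range_succ]
    rw [Finset.sum_eq_single 0]
    · simp
    · intro i hi hi0
      have hilt : i < 2^d := Finset.mem_range.mp hi
      obtain ⟨c, hc⟩ : (2:ℕ) ∣ (2^d).choose i :=
        Nat.Prime.dvd_choose_pow Nat.prime_two hi0 (by omega)
      have hc0 : (((2^d).choose i : ℕ) : ZMod 2) = 0 := by
        rw [hc, Nat.cast_mul]
        have h20 : ((2:ℕ):ZMod 2) = 0 := by decide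
        rw [h20, zero_mul]
      rw [hc0, zero_mul]
    · intro h; simp at h
  rw [hsum]
  congr 1
  have hdvd : p ∣ k + 2^d ↔ p ∣ k + 1 := by
    have h : (k + 2^d) ≡ (k + 1) [MOD p] := Nat.ModEq.add_left k hmod
    constructor
    · intro hh; exact (Nat.modEq_zero_iff_dvd).mp ((h.symm).trans ((Nat.modEq_zero_iff_dvd).mpr hh))
    · intro hh; exact (Nat.modEq_zero_iff_dvd).mp (h.trans ((Nat.modEq_zero_iff_dvd).mpr hh))
  rw [h1 (k+1) (by omega), h1 (k+2^d) (by omega)]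
  simp only [hdvd]
end

section
/- Consider the matrix with first row t_{1,k} = k for k ≥ 1 and t_{j,k} = Z(t_{j-1,k}, t_{j-1,k+1}) where Z(a,b) = ab/gcd(a,b)^2. Then the 2-adic valuation of the first-column entries is: v_2(t_{m,1}) = 1 if m = 2^k for some k ≥ 1, and v_2(t_{m,1}) = 0 otherwise. -/
def Zrule (a b : ℕ) : ℕ := a * b / (Nat.gcd a b) ^ 2

namespace Stmt15Aux

/-- 2-adic valuation via factorization. -/
def v2n (n : ℕ) : ℕ := n.factorization 2

/-- block value: v2(m) + v2(m+1) -/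
def b0 (m : ℕ) : ℕ := v2n m + v2n (m + 1)

lemma dist_def (a b : ℕ) : Nat.dist a b = (a - b) + (b - a) := rfl

lemma Zrule_pos {a b : ℕ} (ha : 0 < a) (hb : 0 < b) : 0 < Zrule a b := by
  have hd : (Nat.gcd a b) ^ 2 ∣ a * b := by
    rw [pow_two]; exact mul_dvd_mul (Nat.gcd_dvd_left a b) (Nat.gcd_dvd_right a b)
  have hg : 0 < Nat.gcd a b := Nat.gcd_pos_of_pos_left b ha
  exact Nat.div_pos (Nat.le_of_dvd (Nat.mul_pos ha hb) hd) (pow_pos hg 2)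

lemma Zrule_fact {a b : ℕ} (ha : 0 < a) (hb : 0 < b) (p : ℕ) :
    (Zrule a b).factorization p = Nat.dist (a.factorization p) (b.factorization p) := by
  have ha' : a ≠ 0 := ha.ne'
  have hb' : b ≠ 0 := hb.ne'
  have hd : (Nat.gcd a b) ^ 2 ∣ a * b := by
    rw [pow_two]; exact mul_dvd_mul (Nat.gcd_dvd_left a b) (Nat.gcd_dvd_right a b)
  unfold Zrule
  rw [Nat.factorization_div hd, Nat.factorization_mul ha' hb', Nat.factorization_pow,
    Nat.factorization_gcd ha' hb']
  simp only [Finsupp.coe_tsub, Pi.sub_apply, Finsupp.coe_add, Pi.add_apply,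
    Finsupp.smul_apply, Finsupp.inf_apply, smul_eq_mul, dist_def]
  omega

lemma v2_of_odd {n : ℕ} (h : ¬ 2 ∣ n) : v2n n = 0 :=
  Nat.factorization_eq_zero_of_not_dvd h

lemma v2_two_mul {n : ℕ} (hn : n ≠ 0) : v2n (2 * n) = v2n n + 1 := by
  unfold v2n
  rw [Nat.factorization_mul two_ne_zero hn]
  simp only [Finsupp.coe_add, Pi.add_apply]
  rw [Nat.Prime.factorization_self Nat.prime_two]
  omega

lemma v2_consec (n : ℕ) : v2n n = 0 ∨ v2n (n + 1) = 0 := by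
  by_cases h : 2 ∣ n
  · exact Or.inr (v2_of_odd (by omega))
  · exact Or.inl (v2_of_odd h)

lemma dist_consec (n : ℕ) : Nat.dist (v2n n) (v2n (n + 1)) = b0 n := by
  rcases v2_consec n with h | h <;> simp [b0, h, dist_def] <;> omega

lemma b0_step {m : ℕ} (hm : 1 ≤ m) :
    Nat.dist (b0 m) (b0 (m + 1)) = if 2 ∣ m then b0 (m / 2) else 0 := by
  rcases Nat.even_or_odd m with ⟨j, hj⟩ | ⟨j, hj⟩
  · subst hj
    have hj0 : j ≠ 0 := by omega
    have e1 : v2n (j + j) = v2n j + 1 := by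
      rw [show j + j = 2 * j by ring]; exact v2_two_mul hj0
    have e2 : v2n (j + j + 1) = 0 := v2_of_odd (by omega)
    have e3 : v2n (j + j + 1 + 1) = v2n (j + 1) + 1 := by
      rw [show j + j + 1 + 1 = 2 * (j + 1) by ring]; exact v2_two_mul (by omega)
    have e4 : Nat.dist (v2n j) (v2n (j + 1)) = b0 j := dist_consec j
    have hdvd : 2 ∣ j + j := ⟨j, by ring⟩
    rw [if_pos hdvd, show (j + j) / 2 = j by omega]
    simp only [b0, e1, e2, e3] at *
    simp only [dist_def] at *
    omega
  · subst hj
    have e1 : v2n (2 * j + 1) = 0 := v2_of_odd (by omega)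
    have e2 : v2n (2 * j + 1 + 1) = v2n (j + 1) + 1 := by
      rw [show 2 * j + 1 + 1 = 2 * (j + 1) by ring]; exact v2_two_mul (by omega)
    have e3 : v2n (2 * j + 1 + 1 + 1) = 0 := v2_of_odd (by omega)
    rw [if_neg (by omega)]
    simp only [b0, e1, e2, e3, dist_def]
    omega

/-- difference operator -/
def Dop (g : ℕ → ℕ) : ℕ → ℕ := fun k => Nat.dist (g k) (g (k + 1))

/-- `g` is `2^s`-sparse with block values `b`. -/
def shape (s : ℕ) (b g : ℕ → ℕ) : Prop :=
  ∀ k, 1 ≤ k → g k = if 2 ^ s ∣ k then b (k / 2 ^ s) else 0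

lemma shape_up {s : ℕ} {b g : ℕ → ℕ} (h : shape (s + 1) b g) :
    shape s (fun m => if 2 ∣ m then b (m / 2) else 0) g := by
  intro k hk
  rw [h k hk]
  by_cases h1 : 2 ^ s ∣ k
  · rw [if_pos h1]
    show _ = if 2 ∣ k / 2 ^ s then b (k / 2 ^ s / 2) else 0
    by_cases h2 : 2 ∣ k / 2 ^ s
    · have hd : 2 ^ (s + 1) ∣ k := by
        rw [pow_succ]; exact (Nat.dvd_div_iff_mul_dvd h1).1 h2
      rw [if_pos hd, if_pos h2, Nat.div_div_eq_div_mul, ← pow_succ]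
    · have hd : ¬ 2 ^ (s + 1) ∣ k := by
        intro hc
        exact h2 ((Nat.dvd_div_iff_mul_dvd h1).2 (by rwa [← pow_succ]))
      rw [if_neg hd, if_neg h2]
  · have hd : ¬ 2 ^ (s + 1) ∣ k :=
      fun hc => h1 ((pow_dvd_pow 2 (Nat.le_succ s)).trans hc)
    rw [if_neg hd, if_neg h1]

lemma shape_down {s : ℕ} {b c g : ℕ → ℕ} (h : shape s c g)
    (hc : ∀ m, 1 ≤ m → c m = if 2 ∣ m then b (m / 2) else 0) :
    shape (s + 1) b g := by
  intro k hk
  rw [h k hk]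
  by_cases h1 : 2 ^ s ∣ k
  · have hm1 : 1 ≤ k / 2 ^ s :=
      (Nat.one_le_div_iff (pow_pos (by norm_num) s)).2 (Nat.le_of_dvd hk h1)
    rw [if_pos h1, hc _ hm1]
    show (if 2 ∣ k / 2 ^ s then b (k / 2 ^ s / 2) else 0) = _
    by_cases h2 : 2 ∣ k / 2 ^ s
    · have hd : 2 ^ (s + 1) ∣ k := by
        rw [pow_succ]; exact (Nat.dvd_div_iff_mul_dvd h1).1 h2
      rw [if_pos hd, if_pos h2, Nat.div_div_eq_div_mul, ← pow_succ]
    · have hd : ¬ 2 ^ (s + 1) ∣ k := by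
        intro hc2
        exact h2 ((Nat.dvd_div_iff_mul_dvd h1).2 (by rwa [← pow_succ]))
      rw [if_neg hd, if_neg h2]
  · have hd : ¬ 2 ^ (s + 1) ∣ k :=
      fun hc2 => h1 ((pow_dvd_pow 2 (Nat.le_succ s)).trans hc2)
    rw [if_neg hd, if_neg h1]

lemma shape_D : ∀ s : ℕ, ∀ b g : ℕ → ℕ, shape s b g →
    shape s (fun m => Nat.dist (b m) (b (m + 1))) (Dop^[2 ^ s] g) := by
  intro s
  induction s with
  | zero =>
    intro b g h k hk
    simp only [pow_zero, Function.iterate_one, one_dvd, if_true, Nat.div_one]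
    show Nat.dist (g k) (g (k + 1)) = _
    rw [h k hk, h (k + 1) (by omega)]
    simp
  | succ s ih =>
    intro b g h
    have h1 := shape_up h
    have h2 := ih _ _ h1
    have h3 : shape s (fun m => if 2 ∣ m then b (m / 2) else b (m / 2 + 1))
        (Dop^[2 ^ s] g) := by
      intro k hk
      rw [h2 k hk]
      by_cases hd : 2 ^ s ∣ k
      · rw [if_pos hd, if_pos hd]
        show Nat.dist (if 2 ∣ k / 2 ^ s then b (k / 2 ^ s / 2) else 0)
            (if 2 ∣ k / 2 ^ s + 1 then b ((k / 2 ^ s + 1) / 2) else 0) =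
            if 2 ∣ k / 2 ^ s then b (k / 2 ^ s / 2) else b (k / 2 ^ s / 2 + 1)
        rcases Nat.even_or_odd (k / 2 ^ s) with ⟨j, hj⟩ | ⟨j, hj⟩ <;> rw [hj]
        · rw [if_pos (by omega), if_neg (by omega), if_pos (by omega),
            Nat.dist_zero_right]
        · rw [if_neg (by omega), if_pos (by omega), if_neg (by omega),
            Nat.dist_zero_left, show (2 * j + 1 + 1) / 2 = (2 * j + 1) / 2 + 1 by omega]
      · rw [if_neg hd, if_neg hd]
    have h4 := ih _ _ h3
    have hit : Dop^[2 ^ (s + 1)] g = Dop^[2 ^ s] (Dop^[2 ^ s] g) := by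
      rw [pow_succ, mul_two, Function.iterate_add_apply]
    rw [← hit] at h4
    refine shape_down h4 ?_
    intro m hm
    show Nat.dist (if 2 ∣ m then b (m / 2) else b (m / 2 + 1))
        (if 2 ∣ m + 1 then b ((m + 1) / 2) else b ((m + 1) / 2 + 1)) =
        if 2 ∣ m then Nat.dist (b (m / 2)) (b (m / 2 + 1)) else 0
    rcases Nat.even_or_odd m with ⟨j, hj⟩ | ⟨j, hj⟩ <;> subst hj
    · rw [if_pos (by omega), if_neg (by omega), if_pos (by omega),
        show (j + j + 1) / 2 + 1 = (j + j) / 2 + 1 by omega]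
    · rw [if_neg (by omega), if_pos (by omega), if_neg (by omega),
        show (2 * j + 1 + 1) / 2 = (2 * j + 1) / 2 + 1 by omega, Nat.dist_self]

lemma Dop_iter_zero {g : ℕ → ℕ} {k : ℕ} : ∀ {r : ℕ},
    (∀ i, k ≤ i → i ≤ k + r → g i = 0) → Dop^[r] g k = 0 := by
  intro r
  induction r generalizing g with
  | zero => intro h; exact h k le_rfl (by omega)
  | succ r ih =>
    intro h
    rw [Function.iterate_succ_apply]
    apply ih
    intro i h1 h2
    show Nat.dist (g i) (g (i + 1)) = 0
    rw [h i h1 (by omega), h (i + 1) (by omega) (by omega), Nat.dist_self]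

lemma Dop_iter_one {g : ℕ → ℕ} {k : ℕ} : ∀ {r : ℕ},
    (∀ i, k ≤ i → i < k + r → g i = 0) → g (k + r) = 1 → Dop^[r] g k = 1 := by
  intro r
  induction r generalizing g with
  | zero => intro _ h1; exact h1
  | succ r ih =>
    intro h0 h1
    rw [Function.iterate_succ_apply]
    apply ih
    · intro i hi1 hi2
      show Nat.dist (g i) (g (i + 1)) = 0
      rw [h0 i hi1 (by omega), h0 (i + 1) (by omega) (by omega), Nat.dist_self]
    · show Nat.dist (g (k + r)) (g (k + r + 1)) = 1
      rw [h0 (k + r) (by omega) (by omega), show k + r + 1 = k + (r + 1) by omega, h1,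
        Nat.dist_zero_left]

lemma b0_one : b0 1 = 1 := by
  unfold b0 v2n
  rw [Nat.factorization_one]
  simp [Nat.Prime.factorization_self Nat.prime_two]

end Stmt15Aux

open Stmt15Aux in
theorem stmt_15 (t : ℕ → ℕ → ℕ)
    (h1 : ∀ k, 1 ≤ k → t 1 k = k)
    (hrec : ∀ j k, 1 ≤ j → 1 ≤ k → t (j + 1) k = Zrule (t j k) (t j (k + 1))) :
    ∀ m, 1 ≤ m →
      ((∃ k, 1 ≤ k ∧ m = 2 ^ k) → (t m 1).factorization 2 = 1) ∧
      (¬(∃ k, 1 ≤ k ∧ m = 2 ^ k) → (t m 1).factorization 2 = 0) := by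
  -- positivity
  have hpos : ∀ j, 1 ≤ j → ∀ k, 1 ≤ k → 0 < t j k := by
    intro j
    induction j with
    | zero => omega
    | succ j ih =>
      intro _ k hk
      by_cases hj : j = 0
      · subst hj; rw [h1 k hk]; omega
      · have hj1 : 1 ≤ j := by omega
        rw [hrec j k hj1 hk]
        exact Zrule_pos (ih hj1 k hk) (ih hj1 (k + 1) (by omega))
  set F : ℕ → ℕ → ℕ := fun j k => (t j k).factorization 2 with hF
  have hFrec : ∀ j, 1 ≤ j → ∀ k, 1 ≤ k → F (j + 1) k = Nat.dist (F j k) (F j (k + 1)) := by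
    intro j hj k hk
    show (t (j + 1) k).factorization 2 = _
    rw [hrec j k hj hk]
    exact Zrule_fact (hpos j hj k hk) (hpos j hj (k + 1) (by omega)) 2
  have hiter : ∀ j, 1 ≤ j → ∀ r, ∀ k, 1 ≤ k → F (j + r) k = Dop^[r] (F j) k := by
    intro j hj r
    induction r with
    | zero => intro k _; rfl
    | succ r ih =>
      intro k hk
      rw [show j + (r + 1) = (j + r) + 1 by omega, hFrec (j + r) (by omega) k hk,
        ih k hk, ih (k + 1) (by omega), Function.iterate_succ_apply']
      rfl
  have hrow : ∀ s, shape s b0 (F (2 ^ s + 1)) := by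
    intro s
    induction s with
    | zero =>
      intro k hk
      simp only [pow_zero, one_dvd, if_true, Nat.div_one]
      rw [hFrec 1 le_rfl k hk]
      have e1 : F 1 k = v2n k := by show (t 1 k).factorization 2 = _; rw [h1 k hk]; rfl
      have e2 : F 1 (k + 1) = v2n (k + 1) := by
        show (t 1 (k + 1)).factorization 2 = _; rw [h1 (k + 1) (by omega)]; rfl
      rw [e1, e2, dist_consec]
    | succ s ih =>
      have h2 := shape_D s b0 _ ih
      have htrans : shape s (fun m => Nat.dist (b0 m) (b0 (m + 1))) (F (2 ^ (s + 1) + 1)) := by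
        intro k hk
        have epow : 2 ^ (s + 1) = 2 ^ s * 2 := pow_succ 2 s
        rw [show 2 ^ (s + 1) + 1 = (2 ^ s + 1) + 2 ^ s by omega,
          hiter (2 ^ s + 1) (by omega) (2 ^ s) k hk]
        exact h2 k hk
      exact shape_down htrans (fun m hm => b0_step hm)
  have hzero_between : ∀ s r, r + 2 ≤ 2 ^ s → F (2 ^ s + 1 + r) 1 = 0 := by
    intro s r hr
    rw [hiter (2 ^ s + 1) (by omega) r 1 le_rfl]
    apply Dop_iter_zero
    intro i hi1 hi2
    rw [hrow s i hi1, if_neg]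
    intro hd
    have := Nat.le_of_dvd (by omega) hd
    omega
  have hone : ∀ s, F (2 ^ (s + 1)) 1 = 1 := by
    intro s
    have hp : 1 ≤ 2 ^ s := Nat.one_le_two_pow
    have epow : 2 ^ (s + 1) = 2 ^ s * 2 := pow_succ 2 s
    rw [show 2 ^ (s + 1) = (2 ^ s + 1) + (2 ^ s - 1) by omega,
      hiter (2 ^ s + 1) (by omega) (2 ^ s - 1) 1 le_rfl]
    apply Dop_iter_one
    · intro i hi1 hi2
      rw [hrow s i hi1, if_neg]
      intro hd
      have := Nat.le_of_dvd (by omega) hd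
      omega
    · rw [show 1 + (2 ^ s - 1) = 2 ^ s by omega, hrow s (2 ^ s) hp, if_pos dvd_rfl,
        Nat.div_self (by omega)]
      exact b0_one
  intro m hm
  constructor
  · rintro ⟨k, hk1, rfl⟩
    obtain ⟨s, rfl⟩ : ∃ s, k = s + 1 := ⟨k - 1, by omega⟩
    exact hone s
  · intro hne
    by_cases hm1 : m = 1
    · subst hm1
      show (t 1 1).factorization 2 = 0
      rw [h1 1 le_rfl]
      simp
    · have hm2 : 2 ≤ m := by omega
      set s := Nat.log 2 (m - 1) with hs
      have hsl : 2 ^ s ≤ m - 1 := Nat.pow_log_le_self 2 (by omega)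
      have hsu : m - 1 < 2 ^ (s + 1) := Nat.lt_pow_succ_log_self (by norm_num) (m - 1)
      have hne2 : m ≠ 2 ^ (s + 1) := fun h => hne ⟨s + 1, by omega, h⟩
      have epow : 2 ^ (s + 1) = 2 ^ s * 2 := pow_succ 2 s
      have hz := hzero_between s (m - 2 ^ s - 1) (by omega)
      rw [show 2 ^ s + 1 + (m - 2 ^ s - 1) = m by omega] at hz
      exact hz
end

section
/- Consider the matrix with first row t_{1,k} = k for k ≥ 1 and t_{j,k} = Z(t_{j-1,k}, t_{j-1,k+1}) where Z(a,b) = ab/gcd(a,b)^2. Then 4 never divides any entry t_{m,1} of the first column. -/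
private lemma Zrule_eq (a b : ℕ) (ha : 0 < a) :
    Zrule a b = (a / Nat.gcd a b) * (b / Nat.gcd a b) := by
  unfold Zrule
  rw [Nat.div_mul_div_comm (Nat.gcd_dvd_left a b) (Nat.gcd_dvd_right a b), pow_two]

private lemma Zrule_pos {a b : ℕ} (ha : 0 < a) (hb : 0 < b) : 0 < Zrule a b := by
  rw [Zrule_eq a b ha]
  have hg : 0 < Nat.gcd a b := Nat.gcd_pos_of_pos_left _ ha
  exact Nat.mul_pos (Nat.div_pos (Nat.le_of_dvd ha (Nat.gcd_dvd_left a b)) hg)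
    (Nat.div_pos (Nat.le_of_dvd hb (Nat.gcd_dvd_right a b)) hg)

private lemma Zrule_val {a b : ℕ} (ha : 0 < a) (hb : 0 < b) :
    padicValNat 2 (Zrule a b) = Nat.dist (padicValNat 2 a) (padicValNat 2 b) := by
  set g := Nat.gcd a b with hgdef
  have hg : 0 < g := Nat.gcd_pos_of_pos_left _ ha
  have ha' : 0 < a / g := Nat.div_pos (Nat.le_of_dvd ha (Nat.gcd_dvd_left a b)) hg
  have hb' : 0 < b / g := Nat.div_pos (Nat.le_of_dvd hb (Nat.gcd_dvd_right a b)) hg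
  have hcop : Nat.Coprime (a / g) (b / g) := Nat.coprime_div_gcd_div_gcd hg
  have hmul : padicValNat 2 (Zrule a b) = padicValNat 2 (a / g) + padicValNat 2 (b / g) := by
    rw [Zrule_eq a b ha, padicValNat.mul ha'.ne' hb'.ne']
  have hva : padicValNat 2 a = padicValNat 2 g + padicValNat 2 (a / g) := by
    conv_lhs => rw [← Nat.mul_div_cancel' (Nat.gcd_dvd_left a b)]
    rw [padicValNat.mul hg.ne' ha'.ne']
  have hvb : padicValNat 2 b = padicValNat 2 g + padicValNat 2 (b / g) := by
    conv_lhs => rw [← Nat.mul_div_cancel' (Nat.gcd_dvd_right a b)]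
    rw [padicValNat.mul hg.ne' hb'.ne']
  have hzero : padicValNat 2 (a / g) = 0 ∨ padicValNat 2 (b / g) = 0 := by
    by_contra h
    push_neg at h
    have h1 : 2 ∣ a / g := by
      by_contra hd; exact h.1 (padicValNat.eq_zero_of_not_dvd hd)
    have h2 : 2 ∣ b / g := by
      by_contra hd; exact h.2 (padicValNat.eq_zero_of_not_dvd hd)
    have := Nat.eq_one_of_dvd_coprimes hcop h1 h2
    omega
  rw [hmul, hva, hvb, Nat.dist_add_add_left]
  rcases hzero with h | h <;> simp [h, Nat.dist] <;> omega

private lemma val_two_mul {k : ℕ} (hk : 0 < k) :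
    padicValNat 2 (2 * k) = padicValNat 2 k + 1 := by
  rw [padicValNat.mul (by norm_num) hk.ne', padicValNat.self (by norm_num)]
  omega

private lemma val_odd {k : ℕ} (hk : 1 ≤ k) : padicValNat 2 (2 * k - 1) = 0 := by
  apply padicValNat.eq_zero_of_not_dvd
  rintro ⟨c, hc⟩; omega

theorem stmt_16 (t : ℕ → ℕ → ℕ)
    (h1 : ∀ k, 1 ≤ k → t 1 k = k)
    (hrec : ∀ j k, 1 ≤ j → 1 ≤ k → t (j + 1) k = Zrule (t j k) (t j (k + 1))) :
    ∀ m, 1 ≤ m → ¬ (4 ∣ t m 1) := by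
  -- positivity
  have hpos : ∀ j, 1 ≤ j → ∀ k, 1 ≤ k → 0 < t j k := by
    intro j hj
    induction j with
    | zero => omega
    | succ j ih =>
      intro k hk
      rcases Nat.eq_or_lt_of_le hj with h | h
      · have : j = 0 := by omega
        subst this; rw [h1 k hk]; omega
      · have hj1 : 1 ≤ j := by omega
        rw [hrec j k hj1 hk]
        exact Zrule_pos (ih hj1 k hk) (ih hj1 (k+1) (by omega))
  set w : ℕ → ℕ → ℕ := fun j k => padicValNat 2 (t j k) with hw
  have wrec : ∀ j k, 1 ≤ j → 1 ≤ k → w (j+1) k = Nat.dist (w j k) (w j (k+1)) := by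
    intro j k hj hk
    simp only [hw]
    rw [hrec j k hj hk]
    exact Zrule_val (hpos j hj k hk) (hpos j hj (k+1) (by omega))
  have w1 : ∀ k, 1 ≤ k → w 1 k = padicValNat 2 k := by
    intro k hk; simp only [hw]; rw [h1 k hk]
  -- row 2
  have w2 : ∀ k, 1 ≤ k → w 2 (2*k-1) = padicValNat 2 k + 1 ∧ w 2 (2*k) = padicValNat 2 k + 1 := by
    intro k hk
    have e1 : (2*k-1) + 1 = 2*k := by omega
    have e2 : (2*k) + 1 = 2*(k+1)-1 := by omega
    constructor
    · rw [wrec 1 (2*k-1) le_rfl (by omega), e1, w1 _ (by omega), w1 _ (by omega),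
        val_odd hk, val_two_mul hk]
      simp [Nat.dist]
    · rw [wrec 1 (2*k) le_rfl (by omega), e2, w1 _ (by omega), w1 _ (by omega),
        val_two_mul hk, val_odd (k := k+1) (by omega)]
      simp [Nat.dist]
  -- row 3
  have w3 : ∀ k, 1 ≤ k → w 3 (2*k-1) = 0 ∧
      w 3 (2*k) = Nat.dist (padicValNat 2 k) (padicValNat 2 (k+1)) := by
    intro k hk
    have e1 : (2*k-1) + 1 = 2*k := by omega
    have e2 : (2*k) + 1 = 2*(k+1)-1 := by omega
    constructor
    · rw [show (3:ℕ) = 2+1 by rfl, wrec 2 (2*k-1) (by omega) (by omega), e1,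
        (w2 k hk).1, (w2 k hk).2]
      simp [Nat.dist]
    · rw [show (3:ℕ) = 2+1 by rfl, wrec 2 (2*k) (by omega) (by omega), e2,
        (w2 k hk).2, (w2 (k+1) (by omega)).1]
      simp [Nat.dist]
  -- main structural lemma
  have H : ∀ i, 2 ≤ i → ∀ k, 1 ≤ k → w (2*i) (2*k-1) = w i k ∧ w (2*i) (2*k) = w i k := by
    intro i hi
    induction i, hi using Nat.le_induction with
    | base =>
      intro k hk
      have e1 : (2*k-1) + 1 = 2*k := by omega
      have e2 : (2*k) + 1 = 2*(k+1)-1 := by omega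
      have h3o := (w3 k hk).1
      have h3e := (w3 k hk).2
      have h3o' := (w3 (k+1) (by omega)).1
      have hw2 : w 2 k = Nat.dist (padicValNat 2 k) (padicValNat 2 (k+1)) := by
        rw [show (2:ℕ) = 1+1 by rfl, wrec 1 k le_rfl hk, w1 k hk, w1 (k+1) (by omega)]
      constructor
      · rw [show 2*2 = 3+1 by rfl, wrec 3 (2*k-1) (by omega) (by omega), e1, h3o, h3e, hw2]
        simp [Nat.dist]
      · rw [show 2*2 = 3+1 by rfl, wrec 3 (2*k) (by omega) (by omega), e2, h3e, h3o', hw2]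
        simp [Nat.dist]
    | succ i hi ih =>
      intro k hk
      have e1 : (2*k-1) + 1 = 2*k := by omega
      have e2 : (2*k) + 1 = 2*(k+1)-1 := by omega
      -- row 2i+1
      have ho : w (2*i+1) (2*k-1) = 0 := by
        rw [wrec (2*i) (2*k-1) (by omega) (by omega), e1, (ih k hk).1, (ih k hk).2]
        simp [Nat.dist]
      have he : w (2*i+1) (2*k) = w (i+1) k := by
        rw [wrec (2*i) (2*k) (by omega) (by omega), e2, (ih k hk).2,
          (ih (k+1) (by omega)).1, wrec i k (by omega) hk]
      have ho' : w (2*i+1) (2*(k+1)-1) = 0 := by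
        have e1' : (2*(k+1)-1) + 1 = 2*(k+1) := by omega
        rw [wrec (2*i) (2*(k+1)-1) (by omega) (by omega), e1',
          (ih (k+1) (by omega)).1, (ih (k+1) (by omega)).2]
        simp [Nat.dist]
      constructor
      · rw [show 2*(i+1) = (2*i+1)+1 by ring, wrec (2*i+1) (2*k-1) (by omega) (by omega),
          e1, ho, he]
        simp [Nat.dist]
      · rw [show 2*(i+1) = (2*i+1)+1 by ring, wrec (2*i+1) (2*k) (by omega) (by omega),
          show (2*k)+1 = 2*(k+1)-1 by omega, he, ho']
        simp [Nat.dist]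
  -- column 1 bound
  have main : ∀ m, 1 ≤ m → w m 1 ≤ 1 := by
    intro m
    induction m using Nat.strong_induction_on with
    | _ m ih =>
      intro hm
      match m, hm with
      | 1, _ => rw [w1 1 le_rfl]; simp
      | 2, _ =>
        have := (w2 1 le_rfl).1
        simp at this; omega
      | 3, _ =>
        have := (w3 1 le_rfl).1
        simp at this; omega
      | (m+4), _ =>
        rcases Nat.even_or_odd (m+4) with ⟨i, hi⟩ | ⟨i, hi⟩
        · have hi2 : 2 ≤ i := by omega
          have := (H i hi2 1 le_rfl).1
          simp at this
          rw [show m+4 = 2*i by omega, this]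
          exact ih i (by omega) (by omega)
        · have hi2 : 2 ≤ i := by omega
          have h1' := (H i hi2 1 le_rfl).1
          have h2' := (H i hi2 1 le_rfl).2
          simp at h1' h2'
          rw [show m+4 = (2*i)+1 by omega, wrec (2*i) 1 (by omega) le_rfl,
            show (1:ℕ)+1 = 2 by rfl, h1', h2']
          simp [Nat.dist]
  intro m hm hdvd
  have hp : 0 < t m 1 := hpos m hm 1 le_rfl
  have : (2:ℕ)^2 ∣ t m 1 := by norm_num at hdvd ⊢; exact hdvd
  rw [padicValNat_dvd_iff_le hp.ne'] at this
  have := main m hm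
  simp only [hw] at this
  omega
end
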